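/- arXiv:1710.01126 — 2 statements merged into one kernel-verified Lean document; each statement's English description precedes it below -/
import Mathlib

section
/- For ρ ∈ [0,1) and a cap C ≥ 0 with C < 1, the minimum of x/(1-x) + y/(1-y) over x, y ≥ 0 with x + y = ρ and y ≤ C is attained at y* = min(ρ/2, C) and x* = max(ρ/2, ρ - C), provided ρ - C < 1. -/
lemma cap_key (x y a b : ℝ) (hx : x < 1) (hy : y < 1) (ha : a < 1) (hb : b < 1)
    (hsum : a + b = x + y) (hprod : x * y ≤ a * b) :
    a / (1 - a) + b / (1 - b) ≤ x / (1 - x) + y / (1 - y) := by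
  have h1 : (0:ℝ) < 1 - x := by linarith
  have h2 : (0:ℝ) < 1 - y := by linarith
  have h3 : (0:ℝ) < 1 - a := by linarith
  have h4 : (0:ℝ) < 1 - b := by linarith
  rw [div_add_div _ _ (by linarith) (by linarith),
      div_add_div _ _ (by linarith) (by linarith),
      div_le_div_iff₀ (by positivity) (by positivity)]
  have hb' : b = x + y - a := by linarith
  subst hb'
  nlinarith [mul_nonneg (sub_nonneg.mpr hprod) (by linarith : (0:ℝ) ≤ 2 - (x + y))]

/-- For `ρ ∈ [0,1)` and a cap `0 ≤ C < 1` with `ρ - C < 1`, the minimum of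
`x/(1-x) + y/(1-y)` over `x, y ≥ 0`, `x + y = ρ`, `y ≤ C` is attained at
`y* = min (ρ/2) C` and `x* = max (ρ/2) (ρ - C)`. -/
theorem capped_optimal_split (ρ C : ℝ) (hρ0 : 0 ≤ ρ) (hρ1 : ρ < 1)
    (hC0 : 0 ≤ C) (hC1 : C < 1) (hρC : ρ - C < 1) :
    0 ≤ max (ρ / 2) (ρ - C) ∧ 0 ≤ min (ρ / 2) C ∧ min (ρ / 2) C ≤ C ∧
    max (ρ / 2) (ρ - C) + min (ρ / 2) C = ρ ∧
    ∀ x y : ℝ, 0 ≤ x → 0 ≤ y → x + y = ρ → y ≤ C →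
      (max (ρ / 2) (ρ - C)) / (1 - max (ρ / 2) (ρ - C)) +
        (min (ρ / 2) C) / (1 - min (ρ / 2) C) ≤ x / (1 - x) + y / (1 - y) := by
  rcases le_total (ρ / 2) C with h | h
  · have hmax : max (ρ / 2) (ρ - C) = ρ / 2 := max_eq_left (by linarith)
    have hmin : min (ρ / 2) C = ρ / 2 := min_eq_left h
    rw [hmax, hmin]
    refine ⟨by linarith, by linarith, h, by ring, ?_⟩
    intro x y hx hy hxy hyC
    apply cap_key <;> try linarith
    nlinarith [sq_nonneg (x - y)]
  · have hmax : max (ρ / 2) (ρ - C) = ρ - C := max_eq_right (by linarith)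
    have hmin : min (ρ / 2) C = C := min_eq_right h
    rw [hmax, hmin]
    refine ⟨by linarith, hC0, le_refl _, by ring, ?_⟩
    intro x y hx hy hxy hyC
    apply cap_key <;> try linarith
    nlinarith [mul_nonneg (sub_nonneg.mpr hyC) (by linarith : (0:ℝ) ≤ ρ - C - y)]
end

section
/- Let f(y) = (ρ - y)/(1 - ρ + y) + y/(1 - y) for y ∈ [0, min(ρ, 1)), with 0 ≤ ρ < 1. Then f is strictly decreasing on [0, ρ/2] and strictly increasing on [ρ/2, min(ρ,1)); in particular its unique minimizer is y = ρ/2. -/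
lemma one_dim_aux (ρ a b : ℝ) (h1 : 0 < 1 - ρ + a) (h2 : 0 < 1 - ρ + b)
    (h3 : 0 < 1 - a) (h4 : 0 < 1 - b) (hab : a < b)
    (hprod : (1 - ρ + a) * (1 - ρ + b) < (1 - a) * (1 - b)) :
    (ρ - b) / (1 - ρ + b) + b / (1 - b) < (ρ - a) / (1 - ρ + a) + a / (1 - a) := by
  rw [div_add_div _ _ (ne_of_gt h2) (ne_of_gt h4),
      div_add_div _ _ (ne_of_gt h1) (ne_of_gt h3),
      div_lt_div_iff₀ (by positivity) (by positivity)]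
  nlinarith [mul_pos (sub_pos.2 hab) (sub_pos.2 hprod)]

lemma one_dim_aux' (ρ a b : ℝ) (h1 : 0 < 1 - ρ + a) (h2 : 0 < 1 - ρ + b)
    (h3 : 0 < 1 - a) (h4 : 0 < 1 - b) (hab : a < b)
    (hprod : (1 - a) * (1 - b) < (1 - ρ + a) * (1 - ρ + b)) :
    (ρ - a) / (1 - ρ + a) + a / (1 - a) < (ρ - b) / (1 - ρ + b) + b / (1 - b) := by
  rw [div_add_div _ _ (ne_of_gt h1) (ne_of_gt h3),
      div_add_div _ _ (ne_of_gt h2) (ne_of_gt h4),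
      div_lt_div_iff₀ (by positivity) (by positivity)]
  nlinarith [mul_pos (sub_pos.2 hab) (sub_pos.2 hprod)]

/-- One-dimensional reduction: for `0 ≤ ρ < 1`, the function
`f y = (ρ - y)/(1 - ρ + y) + y/(1 - y)` is strictly decreasing on `[0, ρ/2]`
and strictly increasing on `[ρ/2, min ρ 1)`; its unique minimizer on
`[0, min ρ 1)` is `y = ρ/2`. -/
theorem one_dim_reduction (ρ : ℝ) (hρ0 : 0 ≤ ρ) (hρ1 : ρ < 1) :
    StrictAntiOn (fun y : ℝ => (ρ - y) / (1 - ρ + y) + y / (1 - y))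
      (Set.Icc 0 (ρ / 2)) ∧
    StrictMonoOn (fun y : ℝ => (ρ - y) / (1 - ρ + y) + y / (1 - y))
      (Set.Ico (ρ / 2) (min ρ 1)) ∧
    ∀ y ∈ Set.Ico (0 : ℝ) (min ρ 1), y ≠ ρ / 2 →
      (ρ - ρ / 2) / (1 - ρ + ρ / 2) + (ρ / 2) / (1 - ρ / 2) <
        (ρ - y) / (1 - ρ + y) + y / (1 - y) := by
  have hanti : StrictAntiOn (fun y : ℝ => (ρ - y) / (1 - ρ + y) + y / (1 - y))
      (Set.Icc 0 (ρ / 2)) := by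
    intro a ha b hb hab
    obtain ⟨ha0, ha2⟩ := ha
    obtain ⟨hb0, hb2⟩ := hb
    have h3 : 0 < 1 - a := by linarith
    have h4 : 0 < 1 - b := by linarith
    have h1 : 0 < 1 - ρ + a := by linarith
    have h2 : 0 < 1 - ρ + b := by linarith
    exact one_dim_aux ρ a b h1 h2 h3 h4 hab
      (by nlinarith)
  have hmono : StrictMonoOn (fun y : ℝ => (ρ - y) / (1 - ρ + y) + y / (1 - y))
      (Set.Ico (ρ / 2) (min ρ 1)) := by
    intro a ha b hb hab
    obtain ⟨ha2, ha1⟩ := ha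
    obtain ⟨hb2, hb1⟩ := hb
    have hb1' : b < 1 := lt_of_lt_of_le hb1 (min_le_right _ _)
    have h3 : 0 < 1 - a := by linarith
    have h4 : 0 < 1 - b := by linarith
    have h1 : 0 < 1 - ρ + a := by linarith
    have h2 : 0 < 1 - ρ + b := by linarith
    exact one_dim_aux' ρ a b h1 h2 h3 h4 hab
      (by nlinarith)
  refine ⟨hanti, hmono, ?_⟩
  intro y hy hne
  obtain ⟨hy0, hy1⟩ := hy
  rcases lt_or_gt_of_ne hne with h | h
  · exact hanti ⟨hy0, le_of_lt h⟩ ⟨by positivity, le_refl _⟩ h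
  · have hhalf : ρ / 2 < min ρ 1 := lt_of_le_of_lt (le_of_lt h) hy1
    exact hmono ⟨le_refl _, hhalf⟩ ⟨le_of_lt h, hy1⟩ h
end
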